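/- arXiv:2404.16989 — 2 statements merged into one kernel-verified Lean document; each statement's English description precedes it below -/
import Mathlib

section
/- Let S, A, X be finite sets and let ρ, ρ' : S × A × X × X⁺ → ℝ≥0 be two joint occupancy measures (nonnegative functions). If the marginals over x⁻ agree, i.e. ∑_{x⁻} ρ(s,a,x,x⁻) = ∑_{x⁻} ρ'(s,a,x,x⁻) for all (s,a,x), and the marginals over a agree, i.e. ∑_a ρ(s,a,x,x⁻) = ∑_a ρ'(s,a,x,x⁻) for all (s,x,x⁻), and both ρ and ρ' factor as ρ(s,a,x,x⁻) = π(a|s,x)·ζ(x|s,x⁻)·μ(s,x⁻) for some conditional kernels π, ζ and marginal μ (and similarly for ρ' with π', ζ', μ'), with μ = μ' and all marginals strictly positive, then ρ = ρ'. -/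
/-- Proposition 3.1 ("only if" direction, with factorization assumptions):
equal (s,a,x)- and (s,x,x⁻)-marginals of two factored, positive occupancy
measures imply the measures are equal. -/
theorem stmt_0 {S A X : Type} [Fintype S] [Fintype A] [Fintype X]
    [Nonempty S] [Nonempty A] [Nonempty X]
    (ρ ρ' : S → A → X → (X ⊕ Unit) → ℝ)
    (hρ : ∀ s a x xm, 0 ≤ ρ s a x xm)
    (hρ' : ∀ s a x xm, 0 ≤ ρ' s a x xm)
    -- marginals over x⁻ agree
    (hmargA : ∀ s a x, ∑ xm, ρ s a x xm = ∑ xm, ρ' s a x xm)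
    -- marginals over a agree
    (hmargB : ∀ s x xm, ∑ a, ρ s a x xm = ∑ a, ρ' s a x xm)
    -- factorization data
    (π : S → X → A → ℝ) (ζ : S → (X ⊕ Unit) → X → ℝ) (μ : S → (X ⊕ Unit) → ℝ)
    (π' : S → X → A → ℝ) (ζ' : S → (X ⊕ Unit) → X → ℝ) (μ' : S → (X ⊕ Unit) → ℝ)
    (hπker : ∀ s x, ∑ a, π s x a = 1) (hζker : ∀ s xm, ∑ x, ζ s xm x = 1)
    (hπ'ker : ∀ s x, ∑ a, π' s x a = 1) (hζ'ker : ∀ s xm, ∑ x, ζ' s xm x = 1)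
    (hπnn : ∀ s x a, 0 ≤ π s x a) (hζnn : ∀ s xm x, 0 ≤ ζ s xm x)
    (hπ'nn : ∀ s x a, 0 ≤ π' s x a) (hζ'nn : ∀ s xm x, 0 ≤ ζ' s xm x)
    (hfac : ∀ s a x xm, ρ s a x xm = π s x a * ζ s xm x * μ s xm)
    (hfac' : ∀ s a x xm, ρ' s a x xm = π' s x a * ζ' s xm x * μ' s xm)
    -- μ, μ' are the (s,x⁻)-marginals
    (hμ : ∀ s xm, μ s xm = ∑ a, ∑ x, ρ s a x xm)
    (hμ' : ∀ s xm, μ' s xm = ∑ a, ∑ x, ρ' s a x xm)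
    (hμeq : μ = μ')
    -- strict positivity of marginals used in divisions
    (hμpos : ∀ s xm, 0 < μ s xm)
    (hsaxpos : ∀ s a x, 0 < ∑ xm, ρ s a x xm) :
    ρ = ρ' := by
  subst hμeq
  have hζeq : ∀ s xm x, ζ s xm x = ζ' s xm x := by
    intro s xm x
    have h1 : ∑ a, ρ s a x xm = ζ s xm x * μ s xm := by
      simp only [hfac]
      rw [← Finset.sum_mul, ← Finset.sum_mul, hπker]
      ring
    have h2 : ∑ a, ρ' s a x xm = ζ' s xm x * μ s xm := by
      simp only [hfac']
      rw [← Finset.sum_mul, ← Finset.sum_mul, hπ'ker]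
      ring
    have := hmargB s x xm
    rw [h1, h2] at this
    exact mul_right_cancel₀ (ne_of_gt (hμpos s xm)) this
  have hπeq : ∀ s x a, π s x a = π' s x a := by
    intro s x a
    have h1 : ∑ xm, ρ s a x xm = π s x a * ∑ xm, ζ s xm x * μ s xm := by
      simp only [hfac]
      rw [Finset.mul_sum]
      congr 1; ext xm; ring
    have h2 : ∑ xm, ρ' s a x xm = π' s x a * ∑ xm, ζ s xm x * μ s xm := by
      simp only [hfac']
      rw [Finset.mul_sum]
      congr 1; ext xm; rw [hζeq]; ring
    have hc : (0:ℝ) < ∑ xm, ζ s xm x * μ s xm := by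
      have := hsaxpos s a x
      rw [h1] at this
      by_contra hle
      push_neg at hle
      have hnn : (0:ℝ) ≤ ∑ xm, ζ s xm x * μ s xm :=
        Finset.sum_nonneg fun xm _ => mul_nonneg (hζnn s xm x) (le_of_lt (hμpos s xm))
      have hz : ∑ xm, ζ s xm x * μ s xm = 0 := le_antisymm hle hnn
      rw [hz, mul_zero] at this
      exact lt_irrefl 0 this
    have := hmargA s a x
    rw [h1, h2] at this
    exact mul_right_cancel₀ (ne_of_gt hc) this
  funext s a x xm
  rw [hfac, hfac', hπeq, hζeq]
end

section
/- Monotone improvement of the E-step (first inequality in Theorem 3.4): let f be convex with f(1)=0, let ρ_E(s,a) be a probability mass function and ρ(s,a,x,x⁻) a probability mass function with (s,a)-marginal ρ(s,a). Among all conditional distributions q(x,x⁻|s,a), the choice q*(x,x⁻|s,a) = ρ(x,x⁻|s,a) := ρ(s,a,x,x⁻)/ρ(s,a) minimizes D_f(ρ(s,a,x,x⁻) ‖ ρ_E(s,a)·q(x,x⁻|s,a)), and the minimum value equals D_f(ρ(s,a) ‖ ρ_E(s,a)). In particular, for any other conditional q, D_f(ρ ‖ ρ_E·q) ≥ D_f(ρ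 ‖ ρ_E·q*). -/
lemma jensen_aux {ι : Type} [Fintype ι] (f : ℝ → ℝ) (hf : ConvexOn ℝ (Set.Ioi 0) f)
    (c : ℝ) (hc : 0 < c) (w r : ι → ℝ) (hw : ∀ i, 0 < w i) (hw1 : ∑ i, w i = 1)
    (hr : ∀ i, 0 < r i) :
    c * f ((∑ i, r i) / c) ≤ ∑ i, (c * w i) * f (r i / (c * w i)) := by
  have key : f (∑ i, w i • (r i / (c * w i))) ≤ ∑ i, w i * f (r i / (c * w i)) :=
    hf.map_sum_le (fun i _ => (hw i).le) hw1
      (fun i _ => Set.mem_Ioi.2 (div_pos (hr i) (mul_pos hc (hw i))))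
  have hsum : ∑ i, w i • (r i / (c * w i)) = (∑ i, r i) / c := by
    rw [Finset.sum_div]
    refine Finset.sum_congr rfl fun i _ => ?_
    have h1 := (hw i).ne'
    have h2 := hc.ne'
    rw [smul_eq_mul]
    field_simp
  rw [hsum] at key
  calc c * f ((∑ i, r i) / c) ≤ c * ∑ i, w i * f (r i / (c * w i)) := by
        exact mul_le_mul_of_nonneg_left key hc.le
    _ = ∑ i, (c * w i) * f (r i / (c * w i)) := by
        rw [Finset.mul_sum]; exact Finset.sum_congr rfl fun i _ => by ring

/-- E-step optimality: the exact posterior q* minimizes the joint f-divergence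
against ρ_E·q, and the minimum equals the marginal f-divergence. -/
theorem stmt_10 {S A X : Type} [Fintype S] [Fintype A] [Fintype X]
    [Nonempty S] [Nonempty A] [Nonempty X]
    (f : ℝ → ℝ) (hf : ConvexOn ℝ (Set.Ioi 0) f) (hf1 : f 1 = 0)
    (ρ : S → A → X → (X ⊕ Unit) → ℝ)
    (hρpos : ∀ s a x xm, 0 < ρ s a x xm)
    (hρsum : ∑ s, ∑ a, ∑ x, ∑ xm, ρ s a x xm = 1)
    (ρE : S → A → ℝ)
    (hρEpos : ∀ s a, 0 < ρE s a) (hρEsum : ∑ s, ∑ a, ρE s a = 1)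
    (q : S → A → X → (X ⊕ Unit) → ℝ)
    (hqpos : ∀ s a x xm, 0 < q s a x xm)
    (hqker : ∀ s a, ∑ x, ∑ xm, q s a x xm = 1)
    (qstar : S → A → X → (X ⊕ Unit) → ℝ)
    (hqstar : ∀ s a x xm,
      qstar s a x xm = ρ s a x xm / (∑ x', ∑ xm', ρ s a x' xm')) :
    (∑ s, ∑ a, ∑ x, ∑ xm,
        (ρE s a * qstar s a x xm) * f (ρ s a x xm / (ρE s a * qstar s a x xm))
      = ∑ s, ∑ a, ρE s a * f ((∑ x, ∑ xm, ρ s a x xm) / ρE s a))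
    ∧ (∑ s, ∑ a, ∑ x, ∑ xm,
        (ρE s a * q s a x xm) * f (ρ s a x xm / (ρE s a * q s a x xm))
      ≥ ∑ s, ∑ a, ∑ x, ∑ xm,
        (ρE s a * qstar s a x xm) * f (ρ s a x xm / (ρE s a * qstar s a x xm))) := by
  have hR : ∀ s a, 0 < ∑ x, ∑ xm, ρ s a x xm := fun s a =>
    Finset.sum_pos (fun x _ => Finset.sum_pos (fun xm _ => hρpos s a x xm) Finset.univ_nonempty)
      Finset.univ_nonempty
  -- per (s,a) equality for qstar
  have heq : ∀ s a, ∑ x, ∑ xm,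
      (ρE s a * qstar s a x xm) * f (ρ s a x xm / (ρE s a * qstar s a x xm))
      = ρE s a * f ((∑ x, ∑ xm, ρ s a x xm) / ρE s a) := by
    intro s a
    set R := ∑ x, ∑ xm, ρ s a x xm with hRdef
    have hRpos := hR s a
    have hne1 : R ≠ 0 := hRpos.ne'
    have hne2 : ρE s a ≠ 0 := (hρEpos s a).ne'
    have hterm : ∀ x xm, (ρE s a * qstar s a x xm) * f (ρ s a x xm / (ρE s a * qstar s a x xm))
        = ρ s a x xm * (ρE s a * f (R / ρE s a) / R) := by
      intro x xm
      have hne3 : ρ s a x xm ≠ 0 := (hρpos s a x xm).ne'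
      rw [hqstar, ← hRdef]
      have harg : ρ s a x xm / (ρE s a * (ρ s a x xm / R)) = R / ρE s a := by
        field_simp
      rw [harg]
      field_simp
    simp_rw [hterm, ← Finset.sum_mul, ← hRdef]
    rw [mul_comm, div_mul_cancel₀ _ hne1]
  constructor
  · exact Finset.sum_congr rfl fun s _ => Finset.sum_congr rfl fun a _ => heq s a
  · refine Finset.sum_le_sum fun s _ => Finset.sum_le_sum fun a _ => ?_
    rw [heq s a]
    have key := jensen_aux (ι := X × (X ⊕ Unit)) f hf (ρE s a) (hρEpos s a)
      (fun p => q s a p.1 p.2) (fun p => ρ s a p.1 p.2)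
      (fun p => hqpos s a p.1 p.2)
      (by rw [Fintype.sum_prod_type]; exact hqker s a)
      (fun p => hρpos s a p.1 p.2)
    rw [Fintype.sum_prod_type, Fintype.sum_prod_type] at key
    exact key
end
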